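/- Let p be a rational prime with p ∤ 6 and let l be a positive integer; write q := p^l. Then in 𝔽_p[t] one has Σ_{m=0}^{q²−1} (1/6)_m (5/6)_m / (m!)² · t^m = (Σ_{m=0}^{q−1} (1/6)_m (5/6)_m / (m!)² · t^m) · (Σ_{n=0}^{q−1} (1/6)_n (5/6)_n / (n!)² · t^{qn}), where each rational coefficient (p-integral since p ∤ 6) is mapped to 𝔽_p via the canonical ring homomorphism. -/

import Mathlib

noncomputable section

open scoped NumberField

open Finset in
/-- The Pochhammer symbol `(a)_n = a (a+1) ⋯ (a+n-1)` of a rational number. -/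
def poch (a : ℚ) (n : ℕ) : ℚ := ∏ i ∈ Finset.range n, (a + i)

/-- The `m`-th coefficient of the hypergeometric series `₂F₁((1/6, 5/6); (1); z)`. -/
def hg21 (m : ℕ) : ℚ := (poch (1/6) m * poch (5/6) m) / (poch 1 m * m.factorial)

/-- The `m`-th coefficient of the hypergeometric series `₃F₂((1/2, 1/6, 5/6); (1, 1); z)`. -/
def hg32 (m : ℕ) : ℚ :=
  (poch (1/2) m * poch (1/6) m * poch (5/6) m) / (poch 1 m * poch 1 m * m.factorial)

/-- The truncation at `z^r` of `₂F₁((1/6, 5/6); (1); z)`, evaluated in a field via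
the canonical (partial) map from `ℚ`. -/
def trunc21 {L : Type*} [DivisionRing L] (z : L) (r : ℕ) : L :=
  ∑ m ∈ Finset.range (r + 1), (hg21 m : L) * z ^ m

/-- The truncation at `z^r` of `₃F₂((1/2, 1/6, 5/6); (1, 1); z)`. -/
def trunc32 {L : Type*} [DivisionRing L] (z : L) (r : ℕ) : L :=
  ∑ m ∈ Finset.range (r + 1), (hg32 m : L) * z ^ m

/-- `a ∈ L` is `𝔭`-integral and reduces to `0` in the residue field at `𝔭`:
it can be written as `x/y` with `x ∈ 𝔭` and `y ∉ 𝔭`. -/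
def ZeroMod {L : Type*} [Field L] [NumberField L] (P : Ideal (𝓞 L)) (a : L) : Prop :=
  ∃ x y : 𝓞 L, y ∉ P ∧ x ∈ P ∧ a * algebraMap (𝓞 L) L y = algebraMap (𝓞 L) L x

/-- Two `𝔭`-integral elements of `L` have the same image in the residue field at `𝔭`. -/
def CongMod {L : Type*} [Field L] [NumberField L] (P : Ideal (𝓞 L)) (a b : L) : Prop := ZeroMod P (a - b)

/-- `a ∈ L` is `𝔭`-integral with `v_𝔭(a) = 0`: it can be written as `x/y` with `x, y ∉ 𝔭`. -/
def ValZero {L : Type*} [Field L] [NumberField L] (P : Ideal (𝓞 L)) (a : L) : Prop :=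
  ∃ x y : 𝓞 L, y ∉ P ∧ x ∉ P ∧ a * algebraMap (𝓞 L) L y = algebraMap (𝓞 L) L x

/-- `a ∈ L` is `𝔭`-integral and reduces to a square in the residue field at `𝔭`. -/
def IsSquareMod {L : Type*} [Field L] [NumberField L] (P : Ideal (𝓞 L)) (a : L) : Prop :=
  ∃ x y c : 𝓞 L, y ∉ P ∧ a * algebraMap (𝓞 L) L y = algebraMap (𝓞 L) L x ∧ x * y - c ^ 2 ∈ P

open scoped Classical in
/-- The quadratic residue symbol `(a | 𝔭)` for a `𝔭`-integral element `a` of `L`: it is `0` if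
`a` reduces to `0` in the residue field `𝔽_𝔭`, `1` if `a` reduces to a nonzero square in `𝔽_𝔭`,
and `-1` otherwise. -/
def quadSym {L : Type*} [Field L] [NumberField L] (P : Ideal (𝓞 L)) (a : L) : ℤ :=
  if ZeroMod P a then 0 else if IsSquareMod P a then 1 else -1

/-- The j-invariant of a Weierstrass curve with nonzero discriminant over a field. -/
def jInv {K : Type*} [Field K] (W : WeierstrassCurve K) : K := W.c₄ ^ 3 / W.Δ

/-- Two Weierstrass curves over `K` are isomorphic, i.e. related by an invertible change of
Weierstrass variables over `K`. -/
def IsoOver {K : Type*} [CommRing K] (W₁ W₂ : WeierstrassCurve K) : Prop :=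
  ∃ C : WeierstrassCurve.VariableChange K, C • W₁ = W₂

/-- `W` is a Weierstrass model with integral coefficients of the elliptic curve `E` over `L`
having good reduction at the prime `P`: `W` is isomorphic to `E` over `L` and the reduction
of `W` modulo `P` is nonsingular. -/
def IsGoodModel {L : Type*} [Field L] [NumberField L] (P : Ideal (𝓞 L)) (E : WeierstrassCurve L) (W : WeierstrassCurve (𝓞 L)) :
    Prop :=
  IsoOver (W.map (algebraMap (𝓞 L) L)) E ∧ (W.map (Ideal.Quotient.mk P)).Δ ≠ 0

/-- The trace of Frobenius `a_𝔭 = N(𝔭) + 1 - #Ẽ(𝔽_𝔭)` attached to (a good model `W` at `𝔭` of)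
an elliptic curve over `L`. -/
def ap {L : Type*} [Field L] [NumberField L] (P : Ideal (𝓞 L)) (W : WeierstrassCurve (𝓞 L)) : ℤ :=
  (Ideal.absNorm P : ℤ) + 1
    - Nat.card (WeierstrassCurve.Affine.Point (W.map (Ideal.Quotient.mk P)).toAffine)


section myaux

lemma my_poch_succ (a : ℚ) (n : ℕ) : poch a (n+1) = poch a n * (a + n) := Finset.prod_range_succ _ _

lemma my_poch_one (n : ℕ) : poch 1 n = n.factorial := by
  induction n with
  | zero => simp [poch]
  | succ n ih => rw [my_poch_succ, ih, Nat.factorial_succ]; push_cast; ring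

/-- The integer `(6m)! / ((3m)! (2m)! m!)`. -/
def myTn (m : ℕ) : ℕ := (6*m).choose (3*m) * (3*m).choose m

lemma my_fact_ne (n : ℕ) : ((n.factorial : ℚ)) ≠ 0 := by
  exact_mod_cast n.factorial_ne_zero

lemma my_hg21_mul_pow (m : ℕ) : hg21 m * 432 ^ m = (myTn m : ℚ) := by
  have key : ∀ m : ℕ, hg21 m * 432 ^ m * ((3*m).factorial * (2*m).factorial * m.factorial) =
      ((6*m).factorial : ℚ) := by
    intro m
    induction m with
    | zero => simp [hg21, poch]
    | succ m ih =>
      have h6 : 6*(m+1) = (6*m+5)+1 := by ring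
      have h3 : 3*(m+1) = (3*m+2)+1 := by ring
      have h2 : 2*(m+1) = (2*m+1)+1 := by ring
      have hg : hg21 (m+1) = hg21 m * ((1/6+m)*(5/6+m)/((m+1)*(m+1))) := by
        rw [hg21, hg21, my_poch_succ, my_poch_succ, my_poch_one, my_poch_one, Nat.factorial_succ]
        have h1 := my_fact_ne m
        have h2 : ((m:ℚ)+1) ≠ 0 := by positivity
        push_cast
        field_simp
      rw [hg, h6, h3, h2]
      simp only [Nat.factorial_succ]
      have h1 := my_fact_ne m
      have hm1 : ((m:ℚ)+1) ≠ 0 := by positivity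
      push_cast
      field_simp
      rw [← ih]
      ring
  have h := key m
  have hT : (myTn m : ℚ) = ((6*m).factorial : ℚ) / ((3*m).factorial * (2*m).factorial * m.factorial) := by
    rw [myTn]
    push_cast
    rw [Nat.cast_choose ℚ (by omega), Nat.cast_choose ℚ (by omega)]
    have e1 : 6*m - 3*m = 3*m := by omega
    have e2 : 3*m - m = 2*m := by omega
    rw [e1, e2]
    field_simp
  rw [hT, ← h]
  field_simp

variable {p : ℕ} [Fact p.Prime]

lemma my_lucas1 (n k : ℕ) :
    ((n.choose k : ℕ) : ZMod p) = ((n % p).choose (k % p) : ZMod p) * ((n / p).choose (k / p) : ZMod p) := by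
  have h := Choose.choose_modEq_choose_mod_mul_choose_div_nat (p := p) (n := n) (k := k)
  rw [← ZMod.natCast_eq_natCast_iff] at h
  rw [h]; push_cast; ring

lemma myTn_single (a b : ℕ) (ha : a < p) :
    ((myTn (a + p*b) : ℕ) : ZMod p) = (myTn a : ZMod p) * (myTn b : ZMod p) := by
  have hp : 0 < p := (Fact.out : p.Prime).pos
  have e6 : 6*(a+p*b) = 6*a + p*(6*b) := by ring
  have e3 : 3*(a+p*b) = 3*a + p*(3*b) := by ring
  have m6 : (6*a + p*(6*b)) % p = 6*a % p := Nat.add_mul_mod_self_left _ _ _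
  have m3 : (3*a + p*(3*b)) % p = 3*a % p := Nat.add_mul_mod_self_left _ _ _
  have m1 : (a + p*(1*b)) % p = a % p := Nat.add_mul_mod_self_left _ _ _
  have d6 : (6*a + p*(6*b)) / p = 6*a / p + 6*b := Nat.add_mul_div_left _ _ hp
  have d3 : (3*a + p*(3*b)) / p = 3*a / p + 3*b := Nat.add_mul_div_left _ _ hp
  have d1 : (a + p*(1*b)) / p = a / p + 1*b := Nat.add_mul_div_left _ _ hp
  have haa : a % p = a := Nat.mod_eq_of_lt ha
  have had : a / p = 0 := Nat.div_eq_of_lt ha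
  rw [myTn, Nat.cast_mul, e6, e3]
  rw [my_lucas1 (6*a + p*(6*b)) (3*a + p*(3*b)), m6, m3, d6, d3]
  have l2 : (((3*a + p*(3*b)).choose (a + p*b) : ℕ) : ZMod p)
      = ((3*a % p).choose a : ZMod p) * ((3*a/p + 3*b).choose b : ZMod p) := by
    rw [show a + p*b = a + p*(1*b) from by ring, my_lucas1 (3*a + p*(3*b)) (a + p*(1*b)),
      m3, m1, d3, d1, haa, had]
    norm_num
  rw [l2]
  by_cases hlt : 6*a < p
  · have h3lt : 3*a < p := by omega
    have m6' : 6*a % p = 6*a := Nat.mod_eq_of_lt hlt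
    have m3' : 3*a % p = 3*a := Nat.mod_eq_of_lt h3lt
    have d6' : 6*a / p = 0 := Nat.div_eq_of_lt hlt
    have d3' : 3*a / p = 0 := Nat.div_eq_of_lt h3lt
    rw [m6', m3', d6', d3']
    simp [myTn]
    ring
  · push_neg at hlt
    rcases lt_or_ge (6*a % p) (3*a % p) with hc | hc
    · have hz : (6*a % p).choose (3*a % p) = 0 := Nat.choose_eq_zero_of_lt hc
      have hTa : (myTn a : ZMod p) = 0 := by
        rw [myTn, Nat.cast_mul, my_lucas1 (6*a) (3*a), hz]
        simp
      rw [hz, hTa]; simp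
    · rcases lt_or_ge (3*a % p) a with hc2 | hc2
      · have hz : (3*a % p).choose a = 0 := Nat.choose_eq_zero_of_lt hc2
        have hTa : (myTn a : ZMod p) = 0 := by
          rw [myTn, Nat.cast_mul, my_lucas1 (3*a) a, haa, hz]
          simp
        rw [hz, hTa]; simp
      · exfalso
        have h1 : 6*a = p * (6*a/p) + 6*a % p := (Nat.div_add_mod _ _).symm
        have h2 : 3*a = p * (3*a/p) + 3*a % p := (Nat.div_add_mod _ _).symm
        have hr1 : 6*a % p < p := Nat.mod_lt _ hp
        have hr2 : 3*a % p < p := Nat.mod_lt _ hp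
        have hc1b : 6*a/p < 6 := by apply Nat.div_lt_of_lt_mul; omega
        have hc2b : 3*a/p < 3 := by apply Nat.div_lt_of_lt_mul; omega
        set c1 := 6*a/p with hc1d
        set c2 := 3*a/p with hc2d
        clear_value c1 c2
        interval_cases c1 <;> interval_cases c2 <;> omega

lemma myTn_digits : ∀ (l : ℕ) (a : ℕ), a < p^l → ∀ b : ℕ,
    ((myTn (a + p^l * b) : ℕ) : ZMod p) = (myTn a : ZMod p) * (myTn b : ZMod p) := by
  intro l
  induction l with
  | zero =>
    intro a ha b
    have : a = 0 := by simpa using ha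
    subst this
    simp [myTn]
  | succ l ih =>
    intro a ha b
    have hp : 0 < p := (Fact.out : p.Prime).pos
    have hdiv : a / p < p^l := by
      rw [Nat.div_lt_iff_lt_mul hp]
      calc a < p^(l+1) := ha
        _ = p^l * p := by ring
    have hmod : a % p < p := Nat.mod_lt _ hp
    have key : a + p^(l+1) * b = a % p + p * (a / p + p^l * b) := by
      have := Nat.mod_add_div a p
      rw [pow_succ]
      ring_nf
      omega
    rw [key, myTn_single _ _ hmod, ih _ hdiv, ← mul_assoc, ← myTn_single _ _ hmod,
      Nat.mod_add_div]

lemma my_not_dvd_432 (hp : p.Prime) (hp6 : ¬ p ∣ 6) : ¬ p ∣ 432 := by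
  intro h
  have h2 : (432 : ℕ) = 2 * 6^3 := by norm_num
  rw [h2] at h
  rcases (Nat.Prime.dvd_mul hp).mp h with h | h
  · exact hp6 (h.trans (by norm_num))
  · exact hp6 (hp.dvd_of_dvd_pow h)

lemma my_432_ne (hp6 : ¬ p ∣ 6) : (432 : ZMod p) ≠ 0 := by
  have hp := (Fact.out : p.Prime)
  intro h
  have h2 : ((432 : ℕ) : ZMod p) = 0 := by push_cast; exact h
  rw [ZMod.natCast_eq_zero_iff] at h2
  exact my_not_dvd_432 hp hp6 h2

lemma my_cast_key (hp6 : ¬ p ∣ 6) (m : ℕ) :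
    ((hg21 m : ℚ) : ZMod p) * (432 : ZMod p) ^ m = (myTn m : ZMod p) := by
  have hp : p.Prime := Fact.out
  set r := hg21 m with hr
  have h := my_hg21_mul_pow m
  have hden : (r.den : ℕ) ∣ 432 ^ m := by
    have hr2 : r = Rat.divInt (myTn m : ℤ) ((432:ℤ) ^ m) := by
      rw [Rat.divInt_eq_div]
      have h432 : ((432:ℚ)) ^ m ≠ 0 := by positivity
      field_simp
      push_cast
      linarith [h]
    have hd := Rat.den_dvd (myTn m : ℤ) ((432:ℤ)^m)
    rw [← hr2] at hd
    exact_mod_cast hd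
  have hdenz : ((r.den : ℕ) : ZMod p) ≠ 0 := by
    rw [Ne, ZMod.natCast_eq_zero_iff]
    intro hdvd
    exact my_not_dvd_432 hp hp6 (hp.dvd_of_dvd_pow (hdvd.trans hden))
  have hq : (r.num : ℚ) * 432 ^ m = (myTn m : ℚ) * (r.den : ℚ) := by
    have hd0 : ((r.den : ℚ)) ≠ 0 := by
      exact_mod_cast r.den_ne_zero
    have hnum : (r.num : ℚ) = r * (r.den : ℚ) := by
      rw [← div_eq_iff hd0]
      exact Rat.num_div_den r
    rw [← hr] at h
    rw [hnum]
    linear_combination ((r.den : ℚ)) * h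
  have hz : (r.num : ℤ) * 432 ^ m = (myTn m : ℤ) * (r.den : ℤ) := by exact_mod_cast hq
  have hzp : ((r.num : ZMod p)) * (432 : ZMod p) ^ m
      = (myTn m : ZMod p) * ((r.den : ℕ) : ZMod p) := by
    have h3 := congrArg (fun z : ℤ => (z : ZMod p)) hz
    push_cast at h3
    exact_mod_cast h3
  rw [Rat.cast_def]
  field_simp [hdenz]
  exact_mod_cast hzp.trans (mul_comm _ _)

lemma my_coeff_key (hp6 : ¬ p ∣ 6) (l : ℕ) (a b : ℕ) (ha : a < p^l) :
    ((hg21 (a + p^l * b) : ℚ) : ZMod p)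
      = ((hg21 a : ℚ) : ZMod p) * ((hg21 b : ℚ) : ZMod p) := by
  have h432 := my_432_ne hp6
  have hne : (432 : ZMod p) ^ a * (432 : ZMod p) ^ b ≠ 0 :=
    mul_ne_zero (pow_ne_zero _ h432) (pow_ne_zero _ h432)
  apply mul_right_cancel₀ hne
  have hpow : (432 : ZMod p) ^ (a + p^l * b) = (432 : ZMod p) ^ a * (432 : ZMod p) ^ b := by
    rw [pow_add, pow_mul, ZMod.pow_card_pow]
  calc ((hg21 (a + p^l * b) : ℚ) : ZMod p) * ((432 : ZMod p) ^ a * (432 : ZMod p) ^ b)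
      = ((hg21 (a + p^l * b) : ℚ) : ZMod p) * (432 : ZMod p) ^ (a + p^l * b) := by rw [hpow]
    _ = (myTn (a + p^l * b) : ZMod p) := my_cast_key hp6 _
    _ = (myTn a : ZMod p) * (myTn b : ZMod p) := myTn_digits l a ha b
    _ = (((hg21 a : ℚ) : ZMod p) * (432 : ZMod p) ^ a)
          * (((hg21 b : ℚ) : ZMod p) * (432 : ZMod p) ^ b) := by
        rw [my_cast_key hp6, my_cast_key hp6]
    _ = ((hg21 a : ℚ) : ZMod p) * ((hg21 b : ℚ) : ZMod p)
          * ((432 : ZMod p) ^ a * (432 : ZMod p) ^ b) := by ring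

end myaux


open Polynomial in
/-- **Lemma 5.2.** Let `p ∤ 6` be a prime, `l ≥ 1` and `q = p^l`. Then in `𝔽_p[t]`,
`Σ_{m<q²} (1/6)_m (5/6)_m/(m!)² tᵐ
  = (Σ_{m<q} (1/6)_m (5/6)_m/(m!)² tᵐ)·(Σ_{n<q} (1/6)_n (5/6)_n/(n!)² t^{qn})`. -/
theorem statement11 (p : ℕ) [Fact p.Prime] (hp6 : ¬p ∣ 6) (l : ℕ) (hl : 0 < l) :
    ∑ m ∈ Finset.range ((p ^ l) ^ 2), C ((hg21 m : ℚ) : ZMod p) * X ^ m =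
      (∑ m ∈ Finset.range (p ^ l), C ((hg21 m : ℚ) : ZMod p) * X ^ m) *
        ∑ n ∈ Finset.range (p ^ l), C ((hg21 n : ℚ) : ZMod p) * X ^ (p ^ l * n) := by
  have hp : 0 < p := (Fact.out : p.Prime).pos
  have hq : 0 < p ^ l := pow_pos hp l
  rw [Finset.sum_mul_sum, pow_two, ← Finset.sum_product']
  refine Finset.sum_nbij' (fun m => (m % p^l, m / p^l)) (fun x => x.1 + p^l * x.2)
    ?_ ?_ ?_ ?_ ?_
  · intro m hm
    rw [Finset.mem_range] at hm
    rw [Finset.mem_product, Finset.mem_range, Finset.mem_range]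
    exact ⟨Nat.mod_lt _ hq, (Nat.div_lt_iff_lt_mul hq).mpr hm⟩
  · intro x hx
    rw [Finset.mem_product, Finset.mem_range, Finset.mem_range] at hx
    rw [Finset.mem_range]
    calc x.1 + p^l * x.2 < p^l * (x.2 + 1) := by rw [Nat.mul_succ]; omega
      _ ≤ p^l * p^l := Nat.mul_le_mul_left _ hx.2
  · intro m _
    exact Nat.mod_add_div m (p^l)
  · intro x hx
    rw [Finset.mem_product, Finset.mem_range, Finset.mem_range] at hx
    have h1 : (x.1 + p^l * x.2) % p^l = x.1 := by
      rw [Nat.add_mul_mod_self_left, Nat.mod_eq_of_lt hx.1]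
    have h2 : (x.1 + p^l * x.2) / p^l = x.2 := by
      rw [Nat.add_mul_div_left _ _ hq, Nat.div_eq_of_lt hx.1, Nat.zero_add]
    exact Prod.ext h1 h2
  · intro m hm
    have e : m % p^l + p^l * (m / p^l) = m := Nat.mod_add_div m (p^l)
    conv_lhs => rw [← e]
    rw [my_coeff_key hp6 l _ _ (Nat.mod_lt _ hq), map_mul, pow_add]
    ring

end
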